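/- Let n ≥ 1 and fix an indeterminate q. Then for all integers j ≥ 0, all b ∈ B and all μ = (μ_1,…,μ_n) ∈ ℤ^n, the unrestricted one-dimensional sum of the level-1 perfect crystal of type A_{2n}^{(2)} satisfies g_j(b,μ) = Σ_γ q^{(1/2)·Σ_{i∈B, i≠0} γ_i(γ_i−1) + Σ_{i∈B} H(b,i)·γ_i} · [j; γ]_q, where the sum is over all γ = (γ_i)_{i∈B} ∈ ℤ_{≥0}^{2n+1} with γ_k − γ_{k̄} = μ_k for 1 ≤ k ≤ n and Σ_{i∈B} γ_i = j. -/

import Mathlib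

open Finset

noncomputable section

/-- The indeterminate `q`, living in the field of rational functions `ℚ(q)`. -/
def q : RatFunc ℚ := RatFunc.X

/-! The level-1 perfect crystal of type `A_{2n}^{(2)}` is `B = {1,…,n,0,n̄,…,1̄}`,
totally ordered by `1 ≺ ⋯ ≺ n ≺ 0 ≺ n̄ ≺ ⋯ ≺ 1̄`. We encode it as `Fin (2n+1)`:
position `p < n` is the letter `p+1`, position `n` is the letter `0`, and position
`n+r` (`1 ≤ r ≤ n`) is the barred letter `\overline{n+1-r}`. -/

/-- The energy function: `H(b,b') = 0` if `b ≺ b'`, `1` if `b ⪰ b'`, with the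
exception `H(0,0) = 0`. -/
def H (n : ℕ) (b b' : Fin (2 * n + 1)) : ℤ :=
  if (b : ℕ) = n ∧ (b' : ℕ) = n then 0
  else if (b : ℕ) < (b' : ℕ) then 0 else 1

/-- Contents: the letter `k` (`1 ≤ k ≤ n`) has content `e_k`, the letter `k̄` has content
`-e_k`, and the letter `0` has content `0`; here `ℤ^n` is indexed by `Fin n`, with index
`k-1` corresponding to `μ_k`. -/
def cont (n : ℕ) (b : Fin (2 * n + 1)) (k : Fin n) : ℤ :=
  if (b : ℕ) = (k : ℕ) then 1 else if (b : ℕ) = 2 * n - (k : ℕ) then -1 else 0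

/-- The unrestricted one-dimensional sum `g_j(b,μ)`: the sum of
`q^{Σ_{i=1}^j i·H(b_{i+1},b_i)}` over all sequences `(b_1,…,b_j) ∈ B^j` of total content
`μ`, with `b_{j+1} = b`. -/
def g (n j : ℕ) (b : Fin (2 * n + 1)) (μ : Fin n → ℤ) : RatFunc ℚ :=
  ∑ p ∈ Finset.univ.filter (fun p : Fin (j + 1) → Fin (2 * n + 1) =>
      p (Fin.last j) = b ∧
      ∀ k, (∑ i : Fin j, cont n (p i.castSucc) k) = μ k),
    q ^ (∑ i : Fin j, ((i : ℤ) + 1) * H n (p i.succ) (p i.castSucc))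

/-- `(q)_m = Π_{i=1}^m (1 - q^i)`. -/
def qfac (m : ℕ) : RatFunc ℚ := ∏ i ∈ Finset.range m, (1 - q ^ (i + 1))

/-! Both sides obey the recursion
`X_{j+1}(b, μ) = Σ_{b'} q^{(j+1) H(b,b')} X_j(b', μ - cont b')` with `X_0(b, μ) = [μ = 0]`.
For `g` this is removing the last letter of the path. On the multinomial side, removing one
letter `b'` from the multiplicity vector `γ` turns the exponent into
`Σ_{i ≠ 0} binom(γ_i, 2) + Σ_{i ≺ b'} γ_i` and multiplies the `q`-multinomial by
`(1 - q^{γ_{b'}}) / (1 - q^{j+1})`. Since `H(b, ·)` is the indicator of an initial segment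
of `B`, the sum over `b'` telescopes back to the term of `γ`. -/

lemma q_ne_zero : q ≠ 0 := RatFunc.X_ne_zero

lemma q_pow_ne_one {m : ℕ} (hm : 0 < m) : q ^ m ≠ 1 := by
  rw [q, ← RatFunc.algebraMap_X, ← map_pow, ← map_one (algebraMap (Polynomial ℚ) (RatFunc ℚ)),
    Ne, (RatFunc.algebraMap_injective ℚ).eq_iff]
  intro h
  simpa [hm.ne'] using congrArg Polynomial.natDegree h

lemma qfac_succ (m : ℕ) : qfac (m + 1) = qfac m * (1 - q ^ (m + 1)) :=
  prod_range_succ _ m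

lemma one_sub_q_pow_ne_zero {m : ℕ} (hm : 0 < m) : 1 - q ^ m ≠ 0 :=
  sub_ne_zero.2 (q_pow_ne_one hm).symm

lemma qfac_ne_zero (m : ℕ) : qfac m ≠ 0 :=
  prod_ne_zero_iff.2 fun i _ => one_sub_q_pow_ne_zero i.succ_pos

section Multinomial

variable {ι : Type*} [Fintype ι] [DecidableEq ι]

def qmultinomial (γ : ι → ℕ) : RatFunc ℚ := qfac (∑ i, γ i) / ∏ i, qfac (γ i)

lemma qmultinomial_add_single (δ : ι → ℕ) (b : ι) :
    (1 - q ^ (δ b + 1)) * qmultinomial (δ + Pi.single b 1 : ι → ℕ) =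
      (1 - q ^ ((∑ i, δ i) + 1)) * qmultinomial δ := by
  have hsum : ∑ i, (δ + Pi.single b 1 : ι → ℕ) i = (∑ i, δ i) + 1 := by
    simp [sum_add_distrib]
  have hprod : ∏ i, qfac ((δ + Pi.single b 1 : ι → ℕ) i) =
      (∏ i, qfac (δ i)) * (1 - q ^ (δ b + 1)) := by
    rw [← prod_mul_prod_compl {b}, ← prod_mul_prod_compl {b} (fun i => qfac (δ i))]
    simp only [prod_singleton, Pi.add_apply, Pi.single_eq_same, qfac_succ]
    rw [prod_congr rfl fun i hi => by rw [Pi.single_eq_of_ne (by simpa using hi), add_zero]]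
    ring
  have hprod_ne : ∀ γ : ι → ℕ, ∏ i, qfac (γ i) ≠ 0 := fun γ =>
    prod_ne_zero_iff.2 fun i _ => qfac_ne_zero _
  have hne : 1 - q ^ (δ b + 1) ≠ 0 := one_sub_q_pow_ne_zero (δ b).succ_pos
  rw [qmultinomial, qmultinomial, hsum, hprod, qfac_succ]
  field_simp

end Multinomial

lemma sum_range_ite_mul_sub_succ {R : Type*} [CommRing R] (F : ℕ → R) {r m : ℕ} (hr : r ≤ m)
    (h0 : F 0 = 1) :
    ∑ t ∈ range m, (if t < r then F m else 1) * (F t - F (t + 1)) = (1 - F m) * F r := by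
  have hsplit : ∀ t, (if t < r then F m else 1) * (F t - F (t + 1)) =
      (F t - F (t + 1)) + if t < r then (F m - 1) * (F t - F (t + 1)) else 0 := by
    intro t; split_ifs <;> ring
  have hfilter : (range m).filter (· < r) = range r := by
    ext t; simp only [mem_filter, mem_range]; omega
  rw [sum_congr rfl fun t _ => hsplit t, sum_add_distrib, sum_range_sub', ← sum_filter, hfilter,
    ← mul_sum, sum_range_sub', h0]
  ring

section PartialSum

variable {m : ℕ}

def partialSum (γ : Fin m → ℕ) (r : ℕ) : ℕ :=
  ∑ i : Fin m, if (i : ℕ) < r then γ i else 0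

lemma partialSum_zero (γ : Fin m → ℕ) : partialSum γ 0 = 0 := by
  simp [partialSum]

lemma partialSum_of_le (γ : Fin m → ℕ) {r : ℕ} (hr : m ≤ r) :
    partialSum γ r = ∑ i, γ i :=
  sum_congr rfl fun i _ => if_pos (i.isLt.trans_le hr)

lemma partialSum_succ (γ : Fin m → ℕ) (b : Fin m) :
    partialSum γ (b + 1) = partialSum γ b + γ b := by
  have hsplit : ∀ i : Fin m, (if (i : ℕ) < b + 1 then γ i else 0) =
      (if (i : ℕ) < b then γ i else 0) + if b = i then γ i else 0 := by
    intro i; split_ifs <;> simp_all [Fin.ext_iff] <;> omega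
  simp only [partialSum, sum_congr rfl fun i _ => hsplit i, sum_add_distrib, sum_ite_eq,
    mem_univ, if_true]

lemma partialSum_add_single_self (δ : Fin m → ℕ) (b : Fin m) (v : ℕ) :
    partialSum (δ + Pi.single b v : Fin m → ℕ) b = partialSum δ b := by
  refine sum_congr rfl fun i _ => ?_
  split_ifs with hi
  · rw [Pi.add_apply, Pi.single_eq_of_ne (fun h => by simp [h] at hi), add_zero]
  · rfl

lemma sum_ite_mul_sub_partialSum {R : Type*} [CommRing R] (x : R) (γ : Fin m → ℕ) {r : ℕ}
    (hr : r ≤ m) :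
    ∑ b : Fin m, (if (b : ℕ) < r then x ^ (∑ i, γ i) else 1) *
        (x ^ partialSum γ b - x ^ (partialSum γ b + γ b)) =
      (1 - x ^ (∑ i, γ i)) * x ^ partialSum γ r := by
  have hm : x ^ partialSum γ m = x ^ (∑ i, γ i) := by rw [partialSum_of_le γ le_rfl]
  rw [← hm, ← sum_range_ite_mul_sub_succ (fun t => x ^ partialSum γ t) hr
    (by simp [partialSum_zero]), ← Fin.sum_univ_eq_sum_range]
  simp only [partialSum_succ]

end PartialSum

lemma two_mul_choose_two (a : ℕ) : 2 * (a.choose 2 : ℤ) = a * (a - 1) := by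
  qify
  rw [Nat.cast_choose_two]
  ring

lemma single_one_le_iff {ι : Type*} [DecidableEq ι] {γ : ι → ℕ} {b : ι} :
    Pi.single b 1 ≤ γ ↔ 0 < γ b := by
  refine ⟨fun h => Nat.lt_of_succ_le (by simpa using h b), fun h i => ?_⟩
  rcases eq_or_ne i b with rfl | hi
  · simpa using Nat.succ_le_of_lt h
  · simp [hi]

section Paths

variable {n : ℕ}

def pathContent {j : ℕ} (p : Fin j → Fin (2 * n + 1)) : Fin n → ℤ := ∑ i, cont n (p i)

def pathEnergy {j : ℕ} (p : Fin (j + 1) → Fin (2 * n + 1)) : ℤ :=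
  ∑ i : Fin j, ((i : ℤ) + 1) * H n (p i.succ) (p i.castSucc)

lemma pathContent_snoc {j : ℕ} (p : Fin j → Fin (2 * n + 1)) (b : Fin (2 * n + 1)) :
    pathContent (Fin.snoc p b : Fin (j + 1) → _) = pathContent p + cont n b := by
  simp [pathContent, Fin.sum_univ_castSucc]

lemma pathEnergy_snoc {j : ℕ} (p : Fin (j + 1) → Fin (2 * n + 1)) (b : Fin (2 * n + 1)) :
    pathEnergy (Fin.snoc p b : Fin (j + 2) → _) =
      pathEnergy p + (j + 1) * H n b (p (Fin.last j)) := by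
  simp [pathEnergy, Fin.sum_univ_castSucc, Fin.succ_castSucc, -Fin.castSucc_succ]

lemma g_eq_sum_snoc (j : ℕ) (b : Fin (2 * n + 1)) (μ : Fin n → ℤ) :
    g n j b μ = ∑ p : Fin j → Fin (2 * n + 1),
      if pathContent p = μ then q ^ pathEnergy (Fin.snoc p b : Fin (j + 1) → _) else 0 := by
  rw [g, sum_filter, ← (Fin.snocEquiv _).sum_comp, Fintype.sum_prod_type]
  simp [Fin.snocEquiv, pathContent, pathEnergy, funext_iff, ite_and, Finset.sum_apply]

lemma g_zero (b : Fin (2 * n + 1)) (μ : Fin n → ℤ) : g n 0 b μ = if μ = 0 then 1 else 0 := by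
  rw [g_eq_sum_snoc, Fintype.sum_unique]
  simp [pathContent, pathEnergy, eq_comm]

lemma g_succ (j : ℕ) (b : Fin (2 * n + 1)) (μ : Fin n → ℤ) :
    g n (j + 1) b μ = ∑ b', q ^ ((j + 1 : ℤ) * H n b b') * g n j b' (μ - cont n b') := by
  rw [g_eq_sum_snoc, ← (Fin.snocEquiv _).sum_comp, Fintype.sum_prod_type]
  refine sum_congr rfl fun b' _ => ?_
  rw [g_eq_sum_snoc, mul_sum]
  refine sum_congr rfl fun p _ => ?_
  simp only [Fin.snocEquiv, Equiv.coe_fn_mk, pathContent_snoc, pathEnergy_snoc, Fin.snoc_last,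
    eq_sub_iff_add_eq, mul_ite, mul_zero, zpow_add₀ q_ne_zero, mul_comm]

end Paths

section Multiplicities

variable {n : ℕ}

/-- The exception `H(0,0) = 0` is why the letter `0` (position `n`) gets `n` rather than
`n + 1`. -/
def energyCut (n : ℕ) (b : Fin (2 * n + 1)) : ℕ := if (b : ℕ) = n then n else b + 1

lemma energyCut_le (b : Fin (2 * n + 1)) : energyCut n b ≤ 2 * n + 1 := by
  unfold energyCut; split_ifs <;> omega

lemma H_eq_ite (b b' : Fin (2 * n + 1)) :
    H n b b' = if (b' : ℕ) < energyCut n b then 1 else 0 := by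
  unfold H energyCut; split_ifs <;> omega

lemma sum_H_mul (b : Fin (2 * n + 1)) (γ : Fin (2 * n + 1) → ℕ) :
    ∑ i, H n b i * (γ i : ℤ) = partialSum γ (energyCut n b) := by
  simp [partialSum, H_eq_ite]

lemma partialSum_energyCut (γ : Fin (2 * n + 1) → ℕ) (b : Fin (2 * n + 1)) :
    partialSum γ (energyCut n b) = partialSum γ b + if (b : ℕ) = n then 0 else γ b := by
  unfold energyCut
  split_ifs with hb
  · rw [hb, add_zero]
  · exact partialSum_succ γ b

def equalLetterPairs (γ : Fin (2 * n + 1) → ℕ) : ℕ :=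
  ∑ i ∈ univ.filter (fun i : Fin (2 * n + 1) => (i : ℕ) ≠ n), (γ i).choose 2

lemma equalLetterPairs_add_single (δ : Fin (2 * n + 1) → ℕ) (b : Fin (2 * n + 1)) :
    equalLetterPairs (δ + Pi.single b 1) =
      equalLetterPairs δ + if (b : ℕ) = n then 0 else δ b := by
  have hsplit : ∀ i, ((δ + Pi.single b 1 : Fin (2 * n + 1) → ℕ) i).choose 2 =
      (δ i).choose 2 + if i = b then δ i else 0 := by
    intro i
    rcases eq_or_ne i b with rfl | hi
    · simp [Nat.choose_succ_succ, add_comm]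
    · simp [hi]
  simp only [equalLetterPairs, hsplit, sum_add_distrib, sum_ite_eq', mem_filter, mem_univ,
    true_and]
  split_ifs <;> simp_all

def weightExponent (b : Fin (2 * n + 1)) (γ : Fin (2 * n + 1) → ℕ) : ℤ :=
  (∑ i ∈ Finset.univ.filter (fun i : Fin (2 * n + 1) => (i : ℕ) ≠ n),
      (γ i : ℤ) * ((γ i : ℤ) - 1)) / 2 + ∑ i, H n b i * (γ i : ℤ)

lemma weightExponent_eq (b : Fin (2 * n + 1)) (γ : Fin (2 * n + 1) → ℕ) :
    weightExponent b γ = equalLetterPairs γ + partialSum γ (energyCut n b) := by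
  rw [weightExponent, sum_H_mul, equalLetterPairs, Nat.cast_sum]
  simp only [← two_mul_choose_two, ← mul_sum, Int.mul_ediv_cancel_left _ two_ne_zero]

lemma weightExponent_eq_of_add_single (δ : Fin (2 * n + 1) → ℕ) (b : Fin (2 * n + 1)) :
    weightExponent b δ =
      equalLetterPairs (δ + Pi.single b 1) + partialSum (δ + Pi.single b 1) b := by
  rw [weightExponent_eq, partialSum_energyCut, equalLetterPairs_add_single,
    partialSum_add_single_self]
  push_cast
  ring

def multinomialTerm (b : Fin (2 * n + 1)) (γ : Fin (2 * n + 1) → ℕ) : RatFunc ℚ :=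
  q ^ weightExponent b γ * qmultinomial γ

lemma q_zpow_mul_H (j : ℕ) (b b' : Fin (2 * n + 1)) :
    q ^ ((j + 1 : ℤ) * H n b b') = if (b' : ℕ) < energyCut n b then q ^ (j + 1) else 1 := by
  rw [H_eq_ite]
  split_ifs
  · rw [mul_one]; exact_mod_cast zpow_natCast q (j + 1)
  · rw [mul_zero, zpow_zero]

lemma q_zpow_mul_multinomialTerm_sub_single {j : ℕ} (b b' : Fin (2 * n + 1))
    {γ : Fin (2 * n + 1) → ℕ} (hγ : ∑ i, γ i = j + 1) (hb' : 0 < γ b') :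
    q ^ ((j + 1 : ℤ) * H n b b') * multinomialTerm b' (γ - Pi.single b' 1) =
      (if (b' : ℕ) < energyCut n b then q ^ (j + 1) else 1) *
        (q ^ partialSum γ b' - q ^ (partialSum γ b' + γ b')) *
          (q ^ equalLetterPairs γ * qmultinomial γ / (1 - q ^ (j + 1))) := by
  obtain ⟨δ, rfl⟩ := le_iff_exists_add'.1 (single_one_le_iff.2 hb')
  have hδ : ∑ i, δ i = j := by simpa [sum_add_distrib] using hγ
  have hmult := qmultinomial_add_single δ b'
  have hne : 1 - q ^ (j + 1) ≠ 0 := one_sub_q_pow_ne_zero j.succ_pos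
  rw [hδ] at hmult
  rw [add_tsub_cancel_right, multinomialTerm, weightExponent_eq_of_add_single, q_zpow_mul_H,
    zpow_add₀ q_ne_zero, zpow_natCast, zpow_natCast, ← mul_div_assoc, eq_div_iff hne]
  simp only [Pi.add_apply, Pi.single_eq_same]
  linear_combination (-(if (b' : ℕ) < energyCut n b then q ^ (j + 1) else 1) *
    q ^ equalLetterPairs (δ + Pi.single b' 1) * q ^ partialSum (δ + Pi.single b' 1) b') * hmult

lemma multinomialTerm_eq_sum {j : ℕ} (b : Fin (2 * n + 1)) {γ : Fin (2 * n + 1) → ℕ}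
    (hγ : ∑ i, γ i = j + 1) :
    multinomialTerm b γ = ∑ b' ∈ univ.filter (fun b' => 0 < γ b'),
      q ^ ((j + 1 : ℤ) * H n b b') * multinomialTerm b' (γ - Pi.single b' 1) := by
  have hne : 1 - q ^ (j + 1) ≠ 0 := one_sub_q_pow_ne_zero j.succ_pos
  rw [sum_congr rfl fun b' hb' =>
      q_zpow_mul_multinomialTerm_sub_single b b' hγ (mem_filter.1 hb').2,
    sum_filter_of_ne fun b' _ h => Nat.pos_of_ne_zero fun h0 => h (by simp [h0]), ← sum_mul,
    ← hγ, sum_ite_mul_sub_partialSum q γ (energyCut_le b), hγ, multinomialTerm,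
    weightExponent_eq, zpow_add₀ q_ne_zero, zpow_natCast, zpow_natCast]
  field_simp

def content (γ : Fin (2 * n + 1) → ℕ) : Fin n → ℤ :=
  fun k => (γ (Fin.castLE (by omega) k) : ℤ) - (γ ⟨2 * n - k, Nat.sub_lt_succ _ _⟩ : ℤ)

lemma content_zero : content (0 : Fin (2 * n + 1) → ℕ) = 0 := by
  ext k
  simp [content]

lemma content_add_single (δ : Fin (2 * n + 1) → ℕ) (b : Fin (2 * n + 1)) :
    content (δ + Pi.single b 1) = content δ + cont n b := by
  ext k
  simp only [content, cont, Pi.add_apply, Pi.single_apply, Fin.ext_iff, Fin.val_castLE]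
  split_ifs <;> push_cast <;> omega

def multiplicities (n j : ℕ) (μ : Fin n → ℤ) : Finset (Fin (2 * n + 1) → ℕ) :=
  (Nat.antidiagonalTuple (2 * n + 1) j).filter (fun γ => content γ = μ)

lemma mem_multiplicities {j : ℕ} {μ : Fin n → ℤ} {γ : Fin (2 * n + 1) → ℕ} :
    γ ∈ multiplicities n j μ ↔ ∑ i, γ i = j ∧ content γ = μ := by
  rw [multiplicities, mem_filter, Nat.mem_antidiagonalTuple]

lemma sum_multiplicities_filter_pos {M : Type*} [AddCommMonoid M] (j : ℕ) (μ : Fin n → ℤ)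
    (b : Fin (2 * n + 1)) (f : (Fin (2 * n + 1) → ℕ) → M) :
    ∑ γ ∈ (multiplicities n (j + 1) μ).filter (fun γ => 0 < γ b), f γ =
      ∑ δ ∈ multiplicities n j (μ - cont n b), f (δ + Pi.single b 1) := by
  refine sum_nbij' (· - Pi.single b 1) (· + Pi.single b 1) (fun γ hγ => ?_) (fun δ hδ => ?_)
    (fun γ hγ => ?_) (fun δ _ => add_tsub_cancel_right δ _) (fun γ hγ => ?_)
  · rw [mem_filter, mem_multiplicities] at hγ
    obtain ⟨⟨hsum, hcontent⟩, hpos⟩ := hγ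
    obtain ⟨δ, rfl⟩ := le_iff_exists_add'.1 (single_one_le_iff.2 hpos)
    rw [add_tsub_cancel_right, mem_multiplicities]
    rw [content_add_single] at hcontent
    exact ⟨by simpa [sum_add_distrib] using hsum, eq_sub_of_add_eq hcontent⟩
  · rw [mem_multiplicities] at hδ
    rw [mem_filter, mem_multiplicities, content_add_single, hδ.2, sub_add_cancel]
    exact ⟨⟨by simp [sum_add_distrib, hδ.1], rfl⟩, by simp⟩
  · exact tsub_add_cancel_of_le (single_one_le_iff.2 (mem_filter.1 hγ).2)
  · rw [tsub_add_cancel_of_le (single_one_le_iff.2 (mem_filter.1 hγ).2)]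

def gMultinomial (n j : ℕ) (b : Fin (2 * n + 1)) (μ : Fin n → ℤ) : RatFunc ℚ :=
  ∑ γ ∈ multiplicities n j μ, multinomialTerm b γ

lemma gMultinomial_zero (b : Fin (2 * n + 1)) (μ : Fin n → ℤ) :
    gMultinomial n 0 b μ = if μ = 0 then 1 else 0 := by
  rw [gMultinomial, multiplicities, Nat.antidiagonalTuple_zero_right, filter_singleton,
    content_zero]
  by_cases hμ : μ = 0
  · simp [hμ, multinomialTerm, weightExponent, qmultinomial, qfac]
  · simp [hμ, Ne.symm hμ]

lemma gMultinomial_succ (j : ℕ) (b : Fin (2 * n + 1)) (μ : Fin n → ℤ) :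
    gMultinomial n (j + 1) b μ =
      ∑ b', q ^ ((j + 1 : ℤ) * H n b b') * gMultinomial n j b' (μ - cont n b') := by
  calc gMultinomial n (j + 1) b μ
      = ∑ γ ∈ multiplicities n (j + 1) μ, ∑ b' ∈ univ.filter (fun b' => 0 < γ b'),
          q ^ ((j + 1 : ℤ) * H n b b') * multinomialTerm b' (γ - Pi.single b' 1) :=
        sum_congr rfl fun γ hγ => multinomialTerm_eq_sum b (mem_multiplicities.1 hγ).1
    _ = ∑ b', ∑ γ ∈ (multiplicities n (j + 1) μ).filter (fun γ => 0 < γ b'),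
          q ^ ((j + 1 : ℤ) * H n b b') * multinomialTerm b' (γ - Pi.single b' 1) :=
        sum_comm' fun γ b' => by simp only [mem_filter, mem_univ, true_and, and_true]
    _ = _ := by
        simp only [sum_multiplicities_filter_pos, add_tsub_cancel_right, gMultinomial, mul_sum]

end Multiplicities

lemma g_eq_gMultinomial (n j : ℕ) (b : Fin (2 * n + 1)) (μ : Fin n → ℤ) :
    g n j b μ = gMultinomial n j b μ := by
  induction j generalizing b μ with
  | zero => rw [g_zero, gMultinomial_zero]
  | succ j ih => simp only [g_succ, gMultinomial_succ, ih]

/-- the `q`-multinomial formula for the unrestricted one-dimensional sum of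
the level-1 perfect crystal of type `A_{2n}^{(2)}`.  The first sum in the exponent runs
over `i ∈ B` with `i ≠ 0` (i.e. over positions `≠ n`). -/
theorem statement4 (n : ℕ) (j : ℕ) (b : Fin (2 * n + 1)) (μ : Fin n → ℤ) :
    g n j b μ =
      ∑ γ ∈ (Finset.Nat.antidiagonalTuple (2 * n + 1) j).filter
          (fun γ => ∀ k : Fin n,
            (γ (⟨k, by have := k.isLt; omega⟩ : Fin (2 * n + 1)) : ℤ) -
              (γ (⟨2 * n - k, by omega⟩ : Fin (2 * n + 1)) : ℤ) = μ k),
        q ^ ((∑ i ∈ Finset.univ.filter (fun i : Fin (2 * n + 1) => (i : ℕ) ≠ n),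
                (γ i : ℤ) * ((γ i : ℤ) - 1)) / 2 +
              ∑ i, H n b i * (γ i : ℤ)) *
          (qfac j / ∏ i, qfac (γ i)) := by
  rw [g_eq_gMultinomial, gMultinomial, multiplicities]
  refine sum_congr (filter_congr fun γ _ => funext_iff) fun γ hγ => ?_
  rw [multinomialTerm, qmultinomial, Nat.mem_antidiagonalTuple.1 (mem_filter.1 hγ).1]
  rfl

end
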